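/- arXiv:1204.6375 — 4 statements merged into one kernel-verified Lean document; each statement's English description precedes it below -/
import Mathlib

section
/- For a 2×2×2 hypermatrix A = (A_{ijk}) with entries in a commutative ring, the three quadratic covariants Bx, By, Bz (defined as determinants of 2×2 matrices of mixed second partials of the trilinear ground form) have the same discriminant, and this common discriminant Δ is Cayley's hyperdeterminant: Δ = A_{000}^2*A_{111}^2 + A_{001}^2*A_{110}^2 + A_{010}^2*A_{101}^2 + A_{011}^2*A_{100}^2 - 2*(A_{000}*A_{001}*A_{110}*A_{111} + A_{000}*A_{010}*A_{101}*A_{111} + A_{000}*A_{011}*A_{100}*A_{111} + A_{001}*A_{010}*A_{101}*A_{110} + A_{001}*A_{011}*A_{110}*A_{100} + A_{010}*A_{011}*A_{101}*A_{100}) + 4*(A_{000}*A_{011}*A_{101}*A_{110} + A_{001}*A_{010}*A_{100}*A_{111}). -/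
open scoped BigOperators

/-- The trilinear ground form of a `2×2×2` hypermatrix. -/
def groundForm {R : Type*} [CommRing R] (A : Fin 2 → Fin 2 → Fin 2 → R)
    (x y z : Fin 2 → R) : R :=
  ∑ i, ∑ j, ∑ k, A i j k * x i * y j * z k

/-- `Bx(x) = det (∂²A/∂y_i∂z_j)`, a binary quadratic form in `x`. -/
def covBx {R : Type*} [CommRing R] (A : Fin 2 → Fin 2 → Fin 2 → R)
    (x : Fin 2 → R) : R :=
  Matrix.det (Matrix.of fun i j : Fin 2 => ∑ m, A m i j * x m)

/-- `By(y) = det (∂²A/∂x_i∂z_j)`. -/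
def covBy {R : Type*} [CommRing R] (A : Fin 2 → Fin 2 → Fin 2 → R)
    (y : Fin 2 → R) : R :=
  Matrix.det (Matrix.of fun i j : Fin 2 => ∑ m, A i m j * y m)

/-- `Bz(z) = det (∂²A/∂x_i∂y_j)`. -/
def covBz {R : Type*} [CommRing R] (A : Fin 2 → Fin 2 → Fin 2 → R)
    (z : Fin 2 → R) : R :=
  Matrix.det (Matrix.of fun i j : Fin 2 => ∑ m, A i j m * z m)

/-- Coefficient of `x0²` in `Bx`. -/
def covBxP {R : Type*} [CommRing R] (A : Fin 2 → Fin 2 → Fin 2 → R) : R :=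
  covBx A ![1, 0]

/-- Coefficient of `x1²` in `Bx`. -/
def covBxR {R : Type*} [CommRing R] (A : Fin 2 → Fin 2 → Fin 2 → R) : R :=
  covBx A ![0, 1]

/-- Coefficient of `x0*x1` in `Bx`. -/
def covBxQ {R : Type*} [CommRing R] (A : Fin 2 → Fin 2 → Fin 2 → R) : R :=
  covBx A ![1, 1] - covBxP A - covBxR A

/-- `C(x,y,z) = (∂A/∂x0)(∂Bx/∂x1) - (∂A/∂x1)(∂Bx/∂x0)`, the Jacobian of `A` and `Bx`
with respect to `x`. -/
def covC {R : Type*} [CommRing R] (A : Fin 2 → Fin 2 → Fin 2 → R)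
    (x y z : Fin 2 → R) : R :=
  (∑ j, ∑ k, A 0 j k * y j * z k) * (covBxQ A * x 0 + 2 * covBxR A * x 1)
    - (∑ j, ∑ k, A 1 j k * y j * z k) * (2 * covBxP A * x 0 + covBxQ A * x 1)

/-- Cayley's hyperdeterminant of a `2×2×2` hypermatrix. -/
def hyperdet {R : Type*} [CommRing R] (A : Fin 2 → Fin 2 → Fin 2 → R) : R :=
  A 0 0 0 ^ 2 * A 1 1 1 ^ 2 + A 0 0 1 ^ 2 * A 1 1 0 ^ 2
    + A 0 1 0 ^ 2 * A 1 0 1 ^ 2 + A 0 1 1 ^ 2 * A 1 0 0 ^ 2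
    - 2 * (A 0 0 0 * A 0 0 1 * A 1 1 0 * A 1 1 1
      + A 0 0 0 * A 0 1 0 * A 1 0 1 * A 1 1 1
      + A 0 0 0 * A 0 1 1 * A 1 0 0 * A 1 1 1
      + A 0 0 1 * A 0 1 0 * A 1 0 1 * A 1 1 0
      + A 0 0 1 * A 0 1 1 * A 1 1 0 * A 1 0 0
      + A 0 1 0 * A 0 1 1 * A 1 0 1 * A 1 0 0)
    + 4 * (A 0 0 0 * A 0 1 1 * A 1 0 1 * A 1 1 0
      + A 0 0 1 * A 0 1 0 * A 1 0 0 * A 1 1 1)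

/-- The three quadratic covariants `Bx`, `By`, `Bz` of a `2×2×2` hypermatrix have the same
discriminant, equal to Cayley's hyperdeterminant. -/
theorem discriminants_eq_hyperdet {R : Type*} [CommRing R]
    (A : Fin 2 → Fin 2 → Fin 2 → R) :
    ∃ px qx rx py qy ry pz qz rz : R,
      (∀ x : Fin 2 → R, covBx A x = px * x 0 ^ 2 + qx * x 0 * x 1 + rx * x 1 ^ 2) ∧
      (∀ y : Fin 2 → R, covBy A y = py * y 0 ^ 2 + qy * y 0 * y 1 + ry * y 1 ^ 2) ∧
      (∀ z : Fin 2 → R, covBz A z = pz * z 0 ^ 2 + qz * z 0 * z 1 + rz * z 1 ^ 2) ∧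
      qx ^ 2 - 4 * px * rx = hyperdet A ∧
      qy ^ 2 - 4 * py * ry = hyperdet A ∧
      qz ^ 2 - 4 * pz * rz = hyperdet A := by
  refine ⟨A 0 0 0 * A 0 1 1 - A 0 0 1 * A 0 1 0,
    A 0 0 0 * A 1 1 1 + A 1 0 0 * A 0 1 1 - A 0 0 1 * A 1 1 0 - A 1 0 1 * A 0 1 0,
    A 1 0 0 * A 1 1 1 - A 1 0 1 * A 1 1 0,
    A 0 0 0 * A 1 0 1 - A 0 0 1 * A 1 0 0,
    A 0 0 0 * A 1 1 1 + A 0 1 0 * A 1 0 1 - A 0 0 1 * A 1 1 0 - A 0 1 1 * A 1 0 0,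
    A 0 1 0 * A 1 1 1 - A 0 1 1 * A 1 1 0,
    A 0 0 0 * A 1 1 0 - A 0 1 0 * A 1 0 0,
    A 0 0 0 * A 1 1 1 + A 0 0 1 * A 1 1 0 - A 0 1 0 * A 1 0 1 - A 0 1 1 * A 1 0 0,
    A 0 0 1 * A 1 1 1 - A 0 1 1 * A 1 0 1, ?_, ?_, ?_, ?_, ?_, ?_⟩
  · intro x; simp [covBx, Matrix.det_fin_two, Fin.sum_univ_two]; ring
  · intro y; simp [covBy, Matrix.det_fin_two, Fin.sum_univ_two]; ring
  · intro z; simp [covBz, Matrix.det_fin_two, Fin.sum_univ_two]; ring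
  · unfold hyperdet; ring
  · unfold hyperdet; ring
  · unfold hyperdet; ring
end

section
/- The hyperdeterminant Δ of the 2×2×2 hypermatrix corresponding to the W state |100⟩ + |010⟩ + |001⟩ (i.e. A_{100} = A_{010} = A_{001} = 1, all other entries 0) equals 0, but the covariant C evaluated on this hypermatrix is nonzero (equal to -2*x0*y0*z0 as a trilinear form, up to sign convention). -/
open scoped BigOperators

/-- The W state `|100⟩ + |010⟩ + |001⟩` as a `2×2×2` hypermatrix. -/
def wState : Fin 2 → Fin 2 → Fin 2 → ℂ := fun i j k =>
  if i = 1 ∧ j = 0 ∧ k = 0 then 1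
  else if i = 0 ∧ j = 1 ∧ k = 0 then 1
  else if i = 0 ∧ j = 0 ∧ k = 1 then 1 else 0

/-- The hyperdeterminant of the W state vanishes, but the covariant `C` is the nonzero
trilinear form `-2*x0*y0*z0` (up to sign convention). -/
theorem wState_hyperdet_zero_C_ne_zero :
    hyperdet wState = 0 ∧
    (∃ ε : ℂ, (ε = 1 ∨ ε = -1) ∧
      ∀ x y z : Fin 2 → ℂ, covC wState x y z = ε * (-2 * (x 0 * y 0 * z 0))) ∧
    (∃ x y z : Fin 2 → ℂ, covC wState x y z ≠ 0) := by
  have hC : ∀ x y z : Fin 2 → ℂ, covC wState x y z = 2 * (x 0 * y 0 * z 0) := by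
    intro x y z
    simp [covC, covBxP, covBxQ, covBxR, covBx, Matrix.det_fin_two, Fin.sum_univ_two,
      wState]
    ring
  refine ⟨?_, ⟨-1, Or.inr rfl, ?_⟩, ![1,0], ![1,0], ![1,0], ?_⟩
  · simp [hyperdet, wState]
  · intro x y z; rw [hC]; ring
  · rw [hC]; norm_num
end

section
/- Cayley's hyperdeterminant of a 2×2×2 hypermatrix is invariant under the action of SL(2,ℂ) on the first tensor factor: if A' is obtained from A by A'_{ijk} = Σ_m g_{im} A_{mjk} for g ∈ SL(2,ℂ), then Δ(A') = Δ(A). -/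
open scoped BigOperators

/-- Cayley's hyperdeterminant is invariant under the `SL(2,ℂ)` action on the first
tensor factor. -/
theorem hyperdet_sl2_invariant (g : Matrix (Fin 2) (Fin 2) ℂ) (hg : g.det = 1)
    (A : Fin 2 → Fin 2 → Fin 2 → ℂ) :
    hyperdet (fun i j k => ∑ m, g i m * A m j k) = hyperdet A := by
  rw [Matrix.det_fin_two] at hg
  simp only [hyperdet, Fin.sum_univ_two]
  linear_combination ((g 0 0 * g 1 1 - g 0 1 * g 1 0) + 1) * (A 0 0 0 ^ 2 * A 1 1 1 ^ 2 + A 0 0 1 ^ 2 * A 1 1 0 ^ 2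
    + A 0 1 0 ^ 2 * A 1 0 1 ^ 2 + A 0 1 1 ^ 2 * A 1 0 0 ^ 2
    - 2 * (A 0 0 0 * A 0 0 1 * A 1 1 0 * A 1 1 1
      + A 0 0 0 * A 0 1 0 * A 1 0 1 * A 1 1 1
      + A 0 0 0 * A 0 1 1 * A 1 0 0 * A 1 1 1
      + A 0 0 1 * A 0 1 0 * A 1 0 1 * A 1 1 0
      + A 0 0 1 * A 0 1 1 * A 1 1 0 * A 1 0 0
      + A 0 1 0 * A 0 1 1 * A 1 0 1 * A 1 0 0)
    + 4 * (A 0 0 0 * A 0 1 1 * A 1 0 1 * A 1 1 0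
      + A 0 0 1 * A 0 1 0 * A 1 0 0 * A 1 1 1)) * hg
end

section
/- The W state tensor e1⊗e0⊗e0 + e0⊗e1⊗e0 + e0⊗e0⊗e1 in ℂ²⊗ℂ²⊗ℂ² cannot be written as a sum of two pure tensors; i.e. its tensor rank is exactly 3. -/
/-- The pure tensor `u ⊗ v ⊗ w` in `ℂ²⊗ℂ²⊗ℂ²`, as a `2×2×2` hypermatrix. -/
def pureTensor (u v w : Fin 2 → ℂ) : Fin 2 → Fin 2 → Fin 2 → ℂ :=
  fun i j k => u i * v j * w k

/-- First standard basis vector of `ℂ²`. -/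
def e0 : Fin 2 → ℂ := ![1, 0]

/-- Second standard basis vector of `ℂ²`. -/
def e1 : Fin 2 → ℂ := ![0, 1]

/-- The W state `e1⊗e0⊗e0 + e0⊗e1⊗e0 + e0⊗e0⊗e1`. -/
def wTensor : Fin 2 → Fin 2 → Fin 2 → ℂ :=
  pureTensor e1 e0 e0 + pureTensor e0 e1 e0 + pureTensor e0 e0 e1

/-- The W state cannot be written as a sum of two pure tensors; its tensor rank is
exactly `3`. -/
theorem wTensor_rank_three :
    (¬ ∃ u v w u' v' w' : Fin 2 → ℂ,
        wTensor = pureTensor u v w + pureTensor u' v' w') ∧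
    (∃ u v w u' v' w' u'' v'' w'' : Fin 2 → ℂ,
        wTensor = pureTensor u v w + pureTensor u' v' w' + pureTensor u'' v'' w'') := by
  constructor
  · rintro ⟨u, v, w, u', v', w', h⟩
    have H : ∀ i j k, wTensor i j k =
        u i * v j * w k + u' i * v' j * w' k := by
      intro i j k
      rw [h]; rfl
    have h000 := H 0 0 0
    have h001 := H 0 0 1
    have h010 := H 0 1 0
    have h011 := H 0 1 1
    have h100 := H 1 0 0
    have h101 := H 1 0 1
    have h110 := H 1 1 0
    have h111 := H 1 1 1
    simp only [wTensor, pureTensor, e0, e1, Pi.add_apply, Matrix.cons_val_zero,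
      Matrix.cons_val_one, Matrix.head_cons, mul_zero, zero_mul, mul_one, one_mul,
      add_zero, zero_add] at h000 h001 h010 h011 h100 h101 h110 h111
    set D : ℂ := (u 0 * u' 1 - u 1 * u' 0) * (v 0 * v' 1 - v 1 * v' 0) with hDdef
    have habD : w 0 * w' 0 * D = -1 := by
      linear_combination -(u 1 * v 1 * w 0 + u' 1 * v' 1 * w' 0) * h000
        + (u 1 * v 0 * w 0 + u' 1 * v' 0 * w' 0) * h010 + h100
    have hcdD : w 1 * w' 1 * D = 0 := by
      linear_combination -(u 1 * v 1 * w 1 + u' 1 * v' 1 * w' 1) * h001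
        + (u 1 * v 0 * w 1 + u' 1 * v' 0 * w' 1) * h011 - h111
    have hE : (w 0 + w 1) * (w' 0 + w' 1) * D = -1 := by
      linear_combination
        -(u 1 * v 1 * (w 0 + w 1) + u' 1 * v' 1 * (w' 0 + w' 1)) * (h000 + h001)
        + (u 1 * v 0 * (w 0 + w 1) + u' 1 * v' 0 * (w' 0 + w' 1)) * (h010 + h011)
        + (h100 + h101) - (h110 + h111)
    have hmixD : (w 0 * w' 1 + w 1 * w' 0) * D = 0 := by
      linear_combination hE - habD - hcdD
    have hD : D ≠ 0 := by
      intro h0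
      rw [h0, mul_zero] at habD
      exact (by norm_num : (0:ℂ) ≠ -1) habD
    have ha : w 0 ≠ 0 := by
      intro h0
      rw [h0, zero_mul, zero_mul] at habD
      exact (by norm_num : (0:ℂ) ≠ -1) habD
    have hcd : w 1 * w' 1 = 0 := by
      rcases mul_eq_zero.mp hcdD with h0 | h0
      · exact h0
      · exact absurd h0 hD
    have hmix : w 0 * w' 1 + w 1 * w' 0 = 0 := by
      rcases mul_eq_zero.mp hmixD with h0 | h0
      · exact h0
      · exact absurd h0 hD
    have hc0 : w 1 = 0 ∧ w' 1 = 0 := by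
      rcases mul_eq_zero.mp hcd with h0 | h0
      · refine ⟨h0, ?_⟩
        have : w 0 * w' 1 = 0 := by linear_combination hmix - w' 0 * h0
        rcases mul_eq_zero.mp this with h1 | h1
        · exact absurd h1 ha
        · exact h1
      · refine ⟨?_, h0⟩
        have : w 1 * w' 0 = 0 := by linear_combination hmix - w 0 * h0
        rcases mul_eq_zero.mp this with h1 | h1
        · exact h1
        · -- w' 0 = 0 contradicts habD
          rw [h1, mul_zero, zero_mul] at habD
          exact absurd habD (by norm_num)
    rw [hc0.1, hc0.2] at h001
    simp at h001
  · exact ⟨e1, e0, e0, e0, e1, e0, e0, e0, e1, rfl⟩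
end
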